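/- Let x̄ ∈ ℝ^n and let a = (a_1, …, a_ω) be an index tuple such that F(x̄) ⊆ {f^{a_1}(x̄), …, f^{a_ω}(x̄)} + K. Let d̄ ∈ ℝ^n satisfy 𝓕^a(x̄, d̄) < 0, and assume there exists 𝒜 ∈ ℝ^m such that f^{a_j}(x̄ + α·d̄) − 𝒜 ∈ int(K) for all j ∈ {1,…,ω} and all α > 0. Then for any ρ ∈ (0,1) and σ ∈ (ρ,1) there exists a nonempty open interval I ⊆ (0, ∞) such that every α ∈ I satisfies the strong Wolfe conditions: (a) f^{a_j}(x̄ + α·d̄) − f^{a_j}(x̄) − ρ·α·𝓕^a(x̄, d̄)·e ∈ −K for all j ∈ {1,…,ω}, the set {f^{a_j}(x̄) + ρ·α·𝓕^a(x̄, d̄)·e : j ∈ {1,…,ω}} is contained in F(x̄ + α·d̄) + K, and F(x̄) ⊆ {f^{a_j}(x̄) + ρ·α·𝓕^a(x̄, d̄)·e : j ∈ {1,…,ω}} + int(K); (b) |𝓕^a(x̄ + α·d̄, d̄)| ≤ σ·|𝓕^a(x̄, d̄)|. -/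

import Mathlib

/-!
The Gerstewitz function is characterised by `ψ_e y ≤ t ↔ t • e - y ∈ K`; it is sublinear,
monotone along `K`, and Lipschitz because `e` is interior to `K`. By Hahn–Banach, every value
`ψ_e w` is attained by a continuous linear minorant of `ψ_e`, so the scalar mean value theorem
gives `ψ_e (γ β - γ α) ≤ M (β - α)` whenever `ψ_e (γ' t) ≤ M` on `(α, β)`.

Put `c = 𝓕^a(x̄, d̄) < 0` and `g t = 𝓕^a(x̄ + t d̄, d̄)`. Applied to `γ = f^{a_j}(x̄ + · d̄)`,
the estimate says that the Armijo decrease with factor `ρ` holds up to any time before which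
`g ≤ ρ c`. The lower bound `𝒜` forbids this for all times, so `g` first reaches `ρ c` at some
`τ > 0`. Armijo holds on `(0, τ)`, and as `σ c < g τ = ρ c < -σ c`, the curvature condition
holds on some interval `(lo, τ)`.
-/

open Set Pointwise

/-- `𝓕^a(x, d) = max_{1 ≤ j ≤ ω} ψ_e(∇f^{a_j}(x)ᵀ d)`. -/
noncomputable def Fcal {n m p : ℕ} (ψ : EuclideanSpace ℝ (Fin m) → ℝ)
    (f : Fin p → EuclideanSpace ℝ (Fin n) → EuclideanSpace ℝ (Fin m))
    {ω : ℕ} (hω : 0 < ω) (a : Fin ω → Fin p)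
    (x d : EuclideanSpace ℝ (Fin n)) : ℝ :=
  Finset.univ.sup' (Finset.univ_nonempty_iff.mpr ⟨⟨0, hω⟩⟩) fun j =>
    ψ (fderiv ℝ (f (a j)) x d)

theorem range_subset_range_add_of_sub_mem {E ι κ : Type*} [AddCommGroup E] {K : Set E}
    {v : ι → E} {u : κ → E} (b : ι → κ) (h : ∀ j, v j - u (b j) ∈ K) :
    range v ⊆ range u + K := by
  rintro _ ⟨j, rfl⟩
  exact ⟨u (b j), mem_range_self _, v j - u (b j), h j, add_sub_cancel _ _⟩

section Cone

variable {E : Type*} [AddCommGroup E] [Module ℝ E]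

def PointedCone.ofConvex (K : Set E) (hKne : K.Nonempty) (hKconv : Convex ℝ K)
    (hKcone : ∀ t : ℝ, 0 ≤ t → ∀ y ∈ K, t • y ∈ K) : PointedCone ℝ E where
  carrier := K
  add_mem' {u v} hu hv := by
    have := hKcone 2 zero_le_two _ (hKconv hu hv (by norm_num : (0 : ℝ) ≤ 1 / 2)
      (by norm_num : (0 : ℝ) ≤ 1 / 2) (by norm_num))
    simpa [smul_add, smul_smul] using this
  zero_mem' := by
    obtain ⟨y, hy⟩ := hKne
    simpa using hKcone 0 le_rfl y hy
  smul_mem' c y hy := hKcone c c.2 y hy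

theorem PointedCone.add_smul_mem_interior [TopologicalSpace E] [IsTopologicalAddGroup E]
    [ContinuousConstSMul ℝ E] (C : PointedCone ℝ E) {u e : E} (hu : u ∈ C)
    (he : e ∈ interior (C : Set E)) {t : ℝ} (ht : 0 < t) :
    u + t • e ∈ interior (C : Set E) := by
  let h := (Homeomorph.smulOfNeZero t ht.ne').trans (Homeomorph.addLeft u)
  refine mem_interior.2 ⟨h '' interior C, ?_, h.isOpenMap _ isOpen_interior, mem_image_of_mem h he⟩
  rintro _ ⟨y, hy, rfl⟩
  exact C.add_mem hu (C.smul_mem (r := t) ht.le (interior_subset hy))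

theorem PointedCone.range_subset_range_add_smul_add_interior [TopologicalSpace E]
    [IsTopologicalAddGroup E] [ContinuousConstSMul ℝ E] (C : PointedCone ℝ E) {ι κ : Type*}
    {u : κ → E} {v : ι → E} (h : range u ⊆ range v + C) {e : E} (he : e ∈ interior (C : Set E))
    {s : ℝ} (hs : s < 0) : range u ⊆ range (fun j => v j + s • e) + interior (C : Set E) := by
  rintro _ ⟨i, rfl⟩
  obtain ⟨_, ⟨j, rfl⟩, k, hk, hjk⟩ := Set.mem_add.1 (h ⟨i, rfl⟩)
  refine ⟨v j + s • e, ⟨j, rfl⟩, k + (-s) • e, C.add_smul_mem_interior hk he (neg_pos.2 hs), ?_⟩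
  show v j + s • e + (k + (-s) • e) = u i
  rw [← hjk, neg_smul]
  abel

end Cone

theorem exists_linearMap_le_eq_of_sublinear {E : Type*} [AddCommGroup E] [Module ℝ E]
    {N : E → ℝ} (N_hom : ∀ c : ℝ, 0 < c → ∀ x, N (c • x) = c * N x)
    (N_add : ∀ x y, N (x + y) ≤ N x + N y) (w : E) :
    ∃ g : E →ₗ[ℝ] ℝ, (∀ x, g x ≤ N x) ∧ g w = N w := by
  have N_zero : N 0 = 0 := by
    have := N_hom 2 two_pos 0
    rw [smul_zero] at this
    linarith
  let f : E →ₗ.[ℝ] ℝ := LinearPMap.mkSpanSingleton' w (N w) fun c hc => by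
    rcases smul_eq_zero.1 hc with rfl | rfl <;> simp [N_zero]
  have hf : ∀ x : f.domain, f x ≤ N x := by
    rintro ⟨x, hx⟩
    obtain ⟨c, rfl⟩ := Submodule.mem_span_singleton.1 hx
    rw [show f ⟨c • w, hx⟩ = c * N w from LinearPMap.mkSpanSingleton'_apply _ _ _ c hx]
    rcases lt_trichotomy c 0 with hc | rfl | hc
    · have h := N_hom (-c) (neg_pos.2 hc) (-w)
      rw [neg_smul_neg] at h
      have := N_add w (-w)
      rw [add_neg_cancel, N_zero] at this
      nlinarith
    · simp [N_zero]
    · exact (N_hom c hc w).ge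
  obtain ⟨g, hgf, hgN⟩ := exists_extension_of_le_sublinear f N N_hom N_add hf
  refine ⟨g, hgN, ?_⟩
  have hw : w ∈ f.domain := Submodule.mem_span_singleton_self w
  rw [hgf ⟨w, hw⟩]
  exact LinearPMap.mkSpanSingleton'_apply_self _ _ _ hw

def IsGerstewitzFunction {E : Type*} [AddCommGroup E] [Module ℝ E] (K : Set E) (e : E)
    (ψ : E → ℝ) : Prop :=
  ∀ y, IsLeast {t : ℝ | t • e - y ∈ K} (ψ y)

namespace IsGerstewitzFunction

section Algebraic

variable {E : Type*} [AddCommGroup E] [Module ℝ E] {C : PointedCone ℝ E} {e : E} {ψ : E → ℝ}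

theorem le_iff (hψ : IsGerstewitzFunction C e ψ) (he : e ∈ C) {y : E} {t : ℝ} :
    ψ y ≤ t ↔ t • e - y ∈ C := by
  refine ⟨fun h => ?_, fun h => (hψ y).2 h⟩
  have hsum := C.add_mem (C.smul_mem (sub_nonneg.2 h) he) (hψ y).1
  rwa [sub_smul, sub_add_sub_cancel] at hsum

theorem map_zero (hψ : IsGerstewitzFunction C e ψ) : ψ 0 = 0 := by
  have hle : ψ 0 ≤ 0 := (hψ 0).2 (by simp)
  have hdouble : ψ 0 ≤ 2 * ψ 0 := (hψ 0).2 <| by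
    simpa [mul_smul] using C.smul_mem zero_le_two (hψ 0).1
  linarith

theorem add_le (hψ : IsGerstewitzFunction C e ψ) (y z : E) : ψ (y + z) ≤ ψ y + ψ z := by
  refine (hψ _).2 ?_
  have hsum := C.add_mem (hψ y).1 (hψ z).1
  rwa [sub_add_sub_comm, ← add_smul] at hsum

theorem map_smul (hψ : IsGerstewitzFunction C e ψ) {t : ℝ} (ht : 0 < t) (y : E) :
    ψ (t • y) = t * ψ y := by
  have hle : ∀ {s : ℝ}, 0 < s → ∀ y, ψ (s • y) ≤ s * ψ y := fun {s} hs y =>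
    (hψ _).2 <| by simpa [smul_sub, mul_smul] using C.smul_mem hs.le (hψ y).1
  refine (hle ht y).antisymm ?_
  have := hle (inv_pos.2 ht) (t • y)
  rw [inv_smul_smul₀ ht.ne'] at this
  rwa [← le_div_iff₀' ht, div_eq_inv_mul]

theorem mono (hψ : IsGerstewitzFunction C e ψ) {y z : E} (hyz : y - z ∈ C) : ψ z ≤ ψ y := by
  refine (hψ z).2 ?_
  have hsum := C.add_mem (hψ y).1 hyz
  rwa [sub_add_sub_cancel] at hsum

end Algebraic

section Normed

variable {E : Type*} [NormedAddCommGroup E] [NormedSpace ℝ E] {C : PointedCone ℝ E} {e : E}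
  {ψ : E → ℝ}

theorem exists_le_mul_norm (hψ : IsGerstewitzFunction C e ψ) (he : e ∈ interior (C : Set E)) :
    ∃ L, ∀ y, ψ y ≤ L * ‖y‖ := by
  obtain ⟨ε, hε, hball⟩ := Metric.nhds_basis_closedBall.mem_iff.1 (mem_interior_iff_mem_nhds.1 he)
  refine ⟨ε⁻¹, fun y => ?_⟩
  rcases eq_or_ne y 0 with rfl | hy
  · simp [hψ.map_zero]
  have hy' : 0 < ‖y‖ := norm_pos_iff.2 hy
  have hmem : e - (ε / ‖y‖) • y ∈ C := hball <| by
    simp [norm_smul, abs_of_pos hε, hy'.ne']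
  have := C.smul_mem (div_pos hy' hε).le hmem
  rw [smul_sub, smul_smul, div_mul_div_cancel₀ hε.ne', div_self hy'.ne', one_smul] at this
  simpa [div_eq_inv_mul] using (hψ y).2 this

theorem continuous (hψ : IsGerstewitzFunction C e ψ) (he : e ∈ interior (C : Set E)) :
    Continuous ψ := by
  obtain ⟨L, hL⟩ := hψ.exists_le_mul_norm he
  refine (LipschitzWith.of_le_add_mul' L fun y z => ?_).continuous
  have := hψ.add_le (y - z) z
  rw [sub_add_cancel] at this
  rw [dist_eq_norm]
  linarith [hL (y - z)]

theorem exists_continuousLinearMap_le_eq (hψ : IsGerstewitzFunction C e ψ)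
    (he : e ∈ interior (C : Set E)) (w : E) :
    ∃ l : E →L[ℝ] ℝ, (∀ y, l y ≤ ψ y) ∧ l w = ψ w := by
  obtain ⟨L, hL⟩ := hψ.exists_le_mul_norm he
  obtain ⟨l, hlψ, hlw⟩ := exists_linearMap_le_eq_of_sublinear (fun _ => hψ.map_smul) hψ.add_le w
  refine ⟨l.mkContinuous L fun y => ?_, hlψ, hlw⟩
  rw [Real.norm_eq_abs, abs_le]
  constructor
  · have := (hlψ (-y)).trans (hL (-y))
    rw [map_neg, norm_neg] at this
    linarith
  · linarith [hlψ y, hL y]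

theorem sub_le_mul_of_hasDerivAt (hψ : IsGerstewitzFunction C e ψ)
    (he : e ∈ interior (C : Set E)) {γ γ' : ℝ → E} {α β M : ℝ} (hαβ : α < β)
    (hγc : ContinuousOn γ (Icc α β)) (hγ : ∀ t ∈ Ioo α β, HasDerivAt γ (γ' t) t)
    (hM : ∀ t ∈ Ioo α β, ψ (γ' t) ≤ M) :
    ψ (γ β - γ α) ≤ M * (β - α) := by
  obtain ⟨l, hlψ, hlw⟩ := hψ.exists_continuousLinearMap_le_eq he (γ β - γ α)
  obtain ⟨t, ht, hslope⟩ := exists_hasDerivAt_eq_slope (l ∘ γ) (fun t => l (γ' t)) hαβ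
    (l.continuous.comp_continuousOn hγc) fun t ht => l.hasFDerivAt.comp_hasDerivAt t (hγ t ht)
  have hβα : 0 < β - α := sub_pos.2 hαβ
  rw [eq_div_iff hβα.ne', Function.comp_apply, Function.comp_apply, ← map_sub, hlw] at hslope
  rw [← hslope]
  exact mul_le_mul_of_nonneg_right ((hlψ _).trans (hM t ht)) hβα.le

end Normed

end IsGerstewitzFunction

open Topology

theorem exists_pos_eq_and_forall_lt_of_lt {g : ℝ → ℝ} (hg : Continuous g) {r : ℝ} (h0 : g 0 < r)
    (h : ∃ t, 0 ≤ t ∧ r ≤ g t) : ∃ τ, 0 < τ ∧ g τ = r ∧ ∀ t ∈ Ico 0 τ, g t < r := by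
  set T := {t : ℝ | 0 ≤ t ∧ r ≤ g t}
  have hT : IsClosed T := (isClosed_le continuous_const continuous_id).inter
    (isClosed_le continuous_const hg)
  have hTbdd : BddBelow T := ⟨0, fun t ht => ht.1⟩
  have hτT : sInf T ∈ T := hT.csInf_mem h hTbdd
  have hτ : 0 < sInf T := hτT.1.lt_of_ne fun h0' => by linarith [h0' ▸ hτT.2]
  obtain ⟨s, hs, hgs⟩ := intermediate_value_Icc hτ.le hg.continuousOn ⟨h0.le, hτT.2⟩
  have hsτ : s = sInf T := hs.2.antisymm (csInf_le hTbdd ⟨hs.1, hgs.ge⟩)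
  refine ⟨sInf T, hτ, hsτ ▸ hgs, fun t ht => ?_⟩
  by_contra! hrt
  exact (csInf_le hTbdd ⟨ht.1, hrt⟩).not_gt ht.2

theorem exists_Ioo_subset_of_mem_nhds_of_pos {s : Set ℝ} {τ : ℝ} (hs : s ∈ 𝓝 τ) (hτ : 0 < τ) :
    ∃ lo ∈ Ioo 0 τ, Ioo lo τ ⊆ s := by
  obtain ⟨l, hl, hsub⟩ := mem_nhdsLT_iff_exists_Ioo_subset.1 (nhdsWithin_le_nhds hs)
  exact ⟨max l (τ / 2), ⟨lt_max_of_lt_right (half_pos hτ), max_lt hl (half_lt_self hτ)⟩,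
    (Ioo_subset_Ioo_left (le_max_left _ _)).trans hsub⟩

section Fcal

variable {n m p ω : ℕ} {ψ : EuclideanSpace ℝ (Fin m) → ℝ}
  {f : Fin p → EuclideanSpace ℝ (Fin n) → EuclideanSpace ℝ (Fin m)} {hω : 0 < ω}
  {a : Fin ω → Fin p}

theorem le_Fcal (j : Fin ω) (x d : EuclideanSpace ℝ (Fin n)) :
    ψ (fderiv ℝ (f (a j)) x d) ≤ Fcal ψ f hω a x d :=
  Finset.le_sup' (fun j => ψ (fderiv ℝ (f (a j)) x d)) (Finset.mem_univ j)

theorem continuous_Fcal_line (hψ : Continuous ψ) (hf : ∀ i, ContDiff ℝ 1 (f i))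
    (x d : EuclideanSpace ℝ (Fin n)) :
    Continuous fun t : ℝ => Fcal ψ f hω a (x + t • d) d := by
  refine Continuous.finset_sup'_apply _ fun j _ => hψ.comp ?_
  exact (((hf (a j)).continuous_fderiv one_ne_zero).comp
    (continuous_const.add (continuous_id.smul continuous_const))).clm_apply continuous_const

variable {C : PointedCone ℝ (EuclideanSpace ℝ (Fin m))} {e : EuclideanSpace ℝ (Fin m)}

theorem IsGerstewitzFunction.sub_le_mul_of_Fcal_le (hψ : IsGerstewitzFunction C e ψ)
    (he : e ∈ interior (C : Set _)) (hf : ∀ i, ContDiff ℝ 1 (f i))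
    {x d : EuclideanSpace ℝ (Fin n)} {α M : ℝ} (hα : 0 < α)
    (hM : ∀ t ∈ Ioo 0 α, Fcal ψ f hω a (x + t • d) d ≤ M) (j : Fin ω) :
    ψ (f (a j) (x + α • d) - f (a j) x) ≤ M * α := by
  have hline : ∀ t : ℝ, HasDerivAt (fun s : ℝ => f (a j) (x + s • d))
      (fderiv ℝ (f (a j)) (x + t • d) d) t := fun t =>
    ((hf (a j)).differentiable one_ne_zero _).hasFDerivAt.comp_hasDerivAt t
      (by simpa using ((hasDerivAt_id t).smul_const d).const_add x)
  simpa using hψ.sub_le_mul_of_hasDerivAt he hα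
    (fun t _ => (hline t).continuousAt.continuousWithinAt) (fun t _ => hline t)
    (fun t ht => (le_Fcal j _ _).trans (hM t ht))

theorem IsGerstewitzFunction.exists_le_Fcal_line (hψ : IsGerstewitzFunction C e ψ)
    (he : e ∈ interior (C : Set _)) (hf : ∀ i, ContDiff ℝ 1 (f i))
    {x d : EuclideanSpace ℝ (Fin n)} {A : EuclideanSpace ℝ (Fin m)} (j : Fin ω)
    (hA : ∀ α : ℝ, 0 < α → f (a j) (x + α • d) - A ∈ C) {M : ℝ} (hM : M < 0) :
    ∃ t : ℝ, 0 ≤ t ∧ M ≤ Fcal ψ f hω a (x + t • d) d := by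
  by_contra! h
  set B := ψ (A - f (a j) x)
  have hα : 0 < (|B| + 1) / -M := div_pos (by positivity) (neg_pos.2 hM)
  have hdescent := hψ.sub_le_mul_of_Fcal_le he hf hα (fun t ht => (h t ht.1.le).le) j
  have hbelow : B ≤ ψ (f (a j) (x + ((|B| + 1) / -M) • d) - f (a j) x) :=
    hψ.mono (by simpa using hA _ hα)
  have hMα : M * ((|B| + 1) / -M) = -(|B| + 1) := by field_simp [hM.ne]
  linarith [neg_abs_le B]

end Fcal

theorem statement11_general {n m p : ℕ} (K : Set (EuclideanSpace ℝ (Fin m)))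
    (hKne : K.Nonempty) (hKconv : Convex ℝ K)
    (hKcone : ∀ t : ℝ, 0 ≤ t → ∀ y ∈ K, t • y ∈ K)
    (e : EuclideanSpace ℝ (Fin m)) (he : e ∈ interior K)
    (ψ : EuclideanSpace ℝ (Fin m) → ℝ)
    (hψ : ∀ y, IsLeast {t : ℝ | t • e - y ∈ K} (ψ y))
    (f : Fin p → EuclideanSpace ℝ (Fin n) → EuclideanSpace ℝ (Fin m))
    (hf : ∀ i, ContDiff ℝ 1 (f i))
    {ω : ℕ} (hω : 0 < ω) (a : Fin ω → Fin p)
    (xb : EuclideanSpace ℝ (Fin n))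
    (hdom : Set.range (fun i => f i xb) ⊆ Set.range (fun j => f (a j) xb) + K)
    (db : EuclideanSpace ℝ (Fin n))
    (hdb : Fcal ψ f hω a xb db < 0)
    (A : EuclideanSpace ℝ (Fin m))
    (hbdd : ∀ (j : Fin ω) (α : ℝ), 0 < α → f (a j) (xb + α • db) - A ∈ interior K)
    (ρ σ : ℝ) (hρ0 : 0 < ρ) (hρσ : ρ < σ) (hσ1 : σ < 1) :
    ∃ lo hi : ℝ, 0 < lo ∧ lo < hi ∧ ∀ α ∈ Set.Ioo lo hi,
      (∀ j : Fin ω,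
        f (a j) (xb + α • db) - f (a j) xb - (ρ * α * Fcal ψ f hω a xb db) • e ∈ -K) ∧
      (Set.range (fun j => f (a j) xb + (ρ * α * Fcal ψ f hω a xb db) • e) ⊆
        Set.range (fun i => f i (xb + α • db)) + K) ∧
      (Set.range (fun i => f i xb) ⊆
        Set.range (fun j => f (a j) xb + (ρ * α * Fcal ψ f hω a xb db) • e)
          + interior K) ∧
      |Fcal ψ f hω a (xb + α • db) db| ≤ σ * |Fcal ψ f hω a xb db| := by
  let C := PointedCone.ofConvex K hKne hKconv hKcone
  have hψC : IsGerstewitzFunction (C : Set _) e ψ := hψ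
  set c := Fcal ψ f hω a xb db
  set g := fun t : ℝ => Fcal ψ f hω a (xb + t • db) db
  have hg : Continuous g := continuous_Fcal_line (hψC.continuous he) hf xb db
  have hg0 : g 0 < ρ * c := by
    simp only [g, zero_smul, add_zero]
    nlinarith
  obtain ⟨τ, hτ, hgτ, hg_lt⟩ := exists_pos_eq_and_forall_lt_of_lt hg hg0 <|
    hψC.exists_le_Fcal_line he hf ⟨0, hω⟩ (fun α hα => interior_subset (hbdd _ α hα))
      (mul_neg_of_pos_of_neg hρ0 hdb)
  have hcurv : g ⁻¹' Icc (σ * c) (-(σ * c)) ∈ 𝓝 τ :=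
    hg.continuousAt.preimage_mem_nhds (hgτ ▸ Icc_mem_nhds (by nlinarith) (by nlinarith))
  obtain ⟨lo, ⟨hlo, hloτ⟩, hsub⟩ := exists_Ioo_subset_of_mem_nhds_of_pos hcurv hτ
  refine ⟨lo, τ, hlo, hloτ, fun α hα => ?_⟩
  have hdesc : ∀ j, (ρ * α * c) • e - (f (a j) (xb + α • db) - f (a j) xb) ∈ K := fun j =>
    (hψC.le_iff (interior_subset he)).1 <| (hψC.sub_le_mul_of_Fcal_le he hf (hlo.trans hα.1)
      (fun t ht => (hg_lt t ⟨ht.1.le, ht.2.trans hα.2⟩).le) j).trans_eq (by ring)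
  refine ⟨fun j => ?_, ?_, C.range_subset_range_add_smul_add_interior hdom he ?_, ?_⟩
  · simpa using hdesc j
  · refine range_subset_range_add_of_sub_mem a fun j => ?_
    convert hdesc j using 1
    abel
  · exact mul_neg_of_pos_of_neg (mul_pos hρ0 (hlo.trans hα.1)) hdb
  · rw [abs_of_neg hdb, abs_le]
    have := hsub hα
    constructor <;> linarith [this.1, this.2]

/-- Existence of step lengths satisfying the strong Wolfe conditions:
under a lower bound assumption on the values `f^{a_j}(x̄ + α•d̄)` along a `K`-descent
direction `d̄`, for any `0 < ρ < σ < 1` there is a nonempty open interval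
`I ⊆ (0, ∞)` such that every `α ∈ I` satisfies the Armijo-type conditions (a) and
the strong curvature condition (b). -/
theorem statement11 {n m p : ℕ} (K : Set (EuclideanSpace ℝ (Fin m)))
    (hKne : K.Nonempty) (hKclosed : IsClosed K) (hKconv : Convex ℝ K)
    (hKcone : ∀ t : ℝ, 0 ≤ t → ∀ y ∈ K, t • y ∈ K)
    (hKpointed : K ∩ (-K) = {0}) (hKsolid : (interior K).Nonempty)
    (e : EuclideanSpace ℝ (Fin m)) (he : e ∈ interior K)
    (ψ : EuclideanSpace ℝ (Fin m) → ℝ)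
    (hψ : ∀ y, IsLeast {t : ℝ | t • e - y ∈ K} (ψ y))
    (f : Fin p → EuclideanSpace ℝ (Fin n) → EuclideanSpace ℝ (Fin m))
    (hf : ∀ i, ContDiff ℝ 1 (f i))
    {ω : ℕ} (hω : 0 < ω) (a : Fin ω → Fin p)
    (xb : EuclideanSpace ℝ (Fin n))
    (hdom : Set.range (fun i => f i xb) ⊆ Set.range (fun j => f (a j) xb) + K)
    (db : EuclideanSpace ℝ (Fin n))
    (hdb : Fcal ψ f hω a xb db < 0)
    (A : EuclideanSpace ℝ (Fin m))
    (hbdd : ∀ (j : Fin ω) (α : ℝ), 0 < α → f (a j) (xb + α • db) - A ∈ interior K)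
    (ρ σ : ℝ) (hρ0 : 0 < ρ) (hρσ : ρ < σ) (hσ1 : σ < 1) :
    ∃ lo hi : ℝ, 0 < lo ∧ lo < hi ∧ ∀ α ∈ Set.Ioo lo hi,
      (∀ j : Fin ω,
        f (a j) (xb + α • db) - f (a j) xb - (ρ * α * Fcal ψ f hω a xb db) • e ∈ -K) ∧
      (Set.range (fun j => f (a j) xb + (ρ * α * Fcal ψ f hω a xb db) • e) ⊆
        Set.range (fun i => f i (xb + α • db)) + K) ∧
      (Set.range (fun i => f i xb) ⊆
        Set.range (fun j => f (a j) xb + (ρ * α * Fcal ψ f hω a xb db) • e)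
          + interior K) ∧
      |Fcal ψ f hω a (xb + α • db) db| ≤ σ * |Fcal ψ f hω a xb db| :=
  statement11_general K hKne hKconv hKcone e he ψ hψ f hf hω a xb hdom db hdb A hbdd ρ σ hρ0 hρσ hσ1
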